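/- arXiv:1105.6075 — 2 statements merged into one kernel-verified Lean document; each statement's English description precedes it below -/
import Mathlib

section
/- Let G be an acyclic directed mixed graph with heads H_1, …, H_k (all of them) and tails T_i = tail_G(H_i), and margins M_i = H_i ∪ T_i. Then there exists an enumeration of the heads such that the resulting ordering of margins is hierarchical: for all indices i < j, M_j is not a subset of M_i, and moreover every effect L with H_j ⊆ L ⊆ M_j satisfies L ⊄ M_i (L is not a subset of M_i). In particular, any enumeration of the heads extending the strict partial order H_i ≺ H_j ⟺ (H_i ⊆ an_G(H_j) and H_i ≠ H_j) has this property. -/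
open Finset

open scoped Classical

variable {V : Type} [Fintype V] [DecidableEq V]

/-- An acyclic directed mixed graph (ADMG): directed edges `dir` and a symmetric
irreflexive set of bidirected edges `bi`, with no directed cycle. -/
structure ADMG (V : Type) [Fintype V] [DecidableEq V] where
  dir : V → V → Prop
  bi : V → V → Prop
  bi_symm : ∀ {v w}, bi v w → bi w v
  bi_irrefl : ∀ v, ¬ bi v v
  acyclic : ∀ v, ¬ Relation.TransGen dir v v

namespace ADMG

/-- Ancestors of (members of) `A`: vertices `w` with `w = a` or a directed path `w → ⋯ → a`
for some `a ∈ A`. -/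
noncomputable def anc (G : ADMG V) (A : Finset V) : Finset V :=
  univ.filter fun w => ∃ a ∈ A, Relation.ReflTransGen G.dir w a

/-- Descendants of (members of) `A`. -/
noncomputable def dec (G : ADMG V) (A : Finset V) : Finset V :=
  univ.filter fun w => ∃ a ∈ A, Relation.ReflTransGen G.dir a w

/-- Parents of (members of) `A`. -/
noncomputable def pa (G : ADMG V) (A : Finset V) : Finset V :=
  univ.filter fun w => ∃ a ∈ A, G.dir w a

/-- `barren_G(U)`: members of `U` with no non-trivial descendant in `U`. -/
noncomputable def barren (G : ADMG V) (U : Finset V) : Finset V :=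
  U.filter fun v => G.dec {v} ∩ U = {v}

/-- `U` is barren if `barren_G(U) = U`. -/
def IsBarren (G : ADMG V) (U : Finset V) : Prop := G.barren U = U

/-- One bidirected step inside the induced subgraph `G_S`. -/
def biStep (G : ADMG V) (S : Finset V) (u w : V) : Prop :=
  u ∈ S ∧ w ∈ S ∧ G.bi u w

/-- District of (members of) `A` in the induced subgraph `G_S`: vertices joined to a member
of `A` by a (possibly empty) bidirected path within `S`. -/
noncomputable def disIn (G : ADMG V) (S A : Finset V) : Finset V :=
  univ.filter fun w => ∃ a ∈ A, a ∈ S ∧ w ∈ S ∧ Relation.ReflTransGen (G.biStep S) a w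

/-- District in the whole graph. -/
noncomputable def dis (G : ADMG V) (A : Finset V) : Finset V := G.disIn univ A

/-- A head: a nonempty barren set connected by bidirected paths in `G_{an_G(H)}`. -/
def IsHead (G : ADMG V) (H : Finset V) : Prop :=
  H.Nonempty ∧ G.IsBarren H ∧
    ∀ a ∈ H, ∀ b ∈ H, Relation.ReflTransGen (G.biStep (G.anc H)) a b

/-- The tail of a head: `tail_G(H) = pa_G(D) ∪ (D ∖ H)` where `D = dis_{G_{an(H)}}(H)`. -/
noncomputable def tail (G : ADMG V) (H : Finset V) : Finset V :=
  G.pa (G.disIn (G.anc H) H) ∪ (G.disIn (G.anc H) H \ H)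

end ADMG

/-- `Gbar` is a head-preserving completion of `G`: a complete supergraph (on the same
vertices) in which every head of `G` is still a head. -/
def IsHPC (G Gbar : ADMG V) : Prop :=
  (∀ v w, G.dir v w → Gbar.dir v w) ∧
  (∀ v w, G.bi v w → Gbar.bi v w) ∧
  (∀ v w : V, v ≠ w → Gbar.dir v w ∨ Gbar.dir w v ∨ Gbar.bi v w) ∧
  (∀ H : Finset V, G.IsHead H → Gbar.IsHead H)

/-- Type of an edge on a path, read from left to right:
`u → w`, `u ← w`, or `u ↔ w`. -/
inductive EdgeType : Type
  | toRight
  | toLeft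
  | biE

/-- The edge of the given type is present in `G` between `u` (left) and `w` (right). -/
def edgeOK (G : ADMG V) : EdgeType → V → V → Prop
  | .toRight, u, w => G.dir u w
  | .toLeft,  u, w => G.dir w u
  | .biE,     u, w => G.bi u w

/-- The edge has an arrowhead at its right endpoint. -/
def arrowAtRight : EdgeType → Prop
  | .toRight => True
  | .toLeft  => False
  | .biE     => True

/-- The edge has an arrowhead at its left endpoint. -/
def arrowAtLeft : EdgeType → Prop
  | .toRight => False
  | .toLeft  => True
  | .biE     => True

/-- A path from `x` to `y` in the mixed graph `G`: distinct vertices `f 0, …, f n`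
joined by edges of the recorded types. -/
structure GPath (G : ADMG V) (x y : V) where
  n : ℕ
  f : Fin (n + 1) → V
  inj : Function.Injective f
  first : f 0 = x
  last : f (Fin.last n) = y
  e : Fin n → EdgeType
  ok : ∀ i : Fin n, edgeOK G (e i) (f i.castSucc) (f i.succ)

/-- The interior vertex `f (i+1)` is a collider on the path: both incident edges
have an arrowhead at it. -/
def GPath.colliderAt {G : ADMG V} {x y : V} (w : GPath G x y)
    (i : ℕ) (h : i + 1 < w.n) : Prop :=
  arrowAtRight (w.e ⟨i, by omega⟩) ∧ arrowAtLeft (w.e ⟨i + 1, h⟩)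

/-- The path is blocked by `C`: some interior non-collider is in `C`, or some interior
collider is outside `an_G(C)`. -/
def GPath.Blocked {G : ADMG V} {x y : V} (w : GPath G x y) (C : Finset V) : Prop :=
  ∃ (i : ℕ) (h : i + 1 < w.n),
    (¬ w.colliderAt i h ∧ w.f ⟨i + 1, by omega⟩ ∈ C) ∨
    (w.colliderAt i h ∧ w.f ⟨i + 1, by omega⟩ ∉ G.anc C)

/-- m-separation of `A` and `B` given `C` in `G`. -/
def MSep (G : ADMG V) (A B C : Finset V) : Prop :=
  ∀ a ∈ A, ∀ b ∈ B, ∀ w : GPath G a b, w.Blocked C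

/-- The enumeration `e` of the heads of `G` yields a hierarchical ordering of the
margins `M i = e i ∪ tail_G(e i)`: for `i < j`, `M j ⊄ M i`, and no effect `L`
with `e j ⊆ L ⊆ M j` is a subset of `M i`. -/
def Hierarchical (G : ADMG V) {k : ℕ} (e : Fin k → Finset V) : Prop :=
  ∀ i j : Fin k, i < j →
    (¬ (e j ∪ G.tail (e j)) ⊆ (e i ∪ G.tail (e i))) ∧
    ∀ L : Finset V, e j ⊆ L → L ⊆ e j ∪ G.tail (e j) →
      ¬ L ⊆ e i ∪ G.tail (e i)

/-
Every margin `H ∪ tail_G(H)` lies in `an_G(H)`. So if an effect `L ⊇ H'` fits inside the margin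
of `H`, then `H' ⊆ an_G(H)`, and any enumeration in which such `H'` come before `H` is
hierarchical. Such enumerations exist: for distinct barren sets, `H' ⊆ an_G(H)` forces
`an_G(H') ⊊ an_G(H)`, so sorting the heads by `|an_G(H)|` extends the order.
-/

theorem Finset.exists_fin_enum_monotone {α : Type*} (s : Finset α) (f : α → ℕ) :
    ∃ (k : ℕ) (e : Fin k → α), Function.Injective e ∧ (∀ a, a ∈ s ↔ ∃ i, e i = a) ∧
      Monotone (f ∘ e) := by
  set l := s.toList.mergeSort (fun a b => f a ≤ f b)
  have hperm : l.Perm s.toList := List.mergeSort_perm _ _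
  have hsorted : l.Pairwise (fun a b => f a ≤ f b) := by
    simpa using List.pairwise_mergeSort (le := fun a b => f a ≤ f b)
      (fun _ _ _ h₁ h₂ => by simp at *; omega) (fun a b => by simp; omega) s.toList
  refine ⟨l.length, l.get, List.nodup_iff_injective_get.mp (hperm.nodup_iff.mpr s.nodup_toList),
    fun a => by rw [← Finset.mem_toList, ← hperm.mem_iff, List.mem_iff_get], ?_⟩
  intro i j hij
  rcases hij.lt_or_eq with h | rfl
  · exact hsorted.rel_get_of_lt h
  · exact le_rfl

namespace ADMG

variable (G : ADMG V)

theorem mem_anc {A : Finset V} {w : V} :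
    w ∈ G.anc A ↔ ∃ a ∈ A, Relation.ReflTransGen G.dir w a := by
  simp [anc]

theorem subset_anc (A : Finset V) : A ⊆ G.anc A :=
  fun a ha => G.mem_anc.mpr ⟨a, ha, .refl⟩

theorem anc_subset_anc_of_subset_anc {A B : Finset V} (h : A ⊆ G.anc B) :
    G.anc A ⊆ G.anc B := by
  intro w hw
  obtain ⟨a, ha, hwa⟩ := G.mem_anc.mp hw
  obtain ⟨b, hb, hab⟩ := G.mem_anc.mp (h ha)
  exact G.mem_anc.mpr ⟨b, hb, hwa.trans hab⟩

theorem disIn_subset (S A : Finset V) : G.disIn S A ⊆ S := by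
  intro w hw
  simp only [disIn, mem_filter, mem_univ, true_and] at hw
  obtain ⟨_, _, _, hwS, _⟩ := hw
  exact hwS

theorem pa_subset_anc_of_subset_anc {A B : Finset V} (h : A ⊆ G.anc B) :
    G.pa A ⊆ G.anc B := by
  intro w hw
  simp only [pa, mem_filter, mem_univ, true_and] at hw
  obtain ⟨a, ha, hwa⟩ := hw
  obtain ⟨b, hb, hab⟩ := G.mem_anc.mp (h ha)
  exact G.mem_anc.mpr ⟨b, hb, .head hwa hab⟩

theorem tail_subset_anc (H : Finset V) : G.tail H ⊆ G.anc H :=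
  union_subset (G.pa_subset_anc_of_subset_anc (G.disIn_subset _ H))
    (sdiff_subset.trans (G.disIn_subset _ H))

theorem margin_subset_anc (H : Finset V) : H ∪ G.tail H ⊆ G.anc H :=
  union_subset (G.subset_anc H) (G.tail_subset_anc H)

theorem eq_of_reflTransGen_of_reflTransGen {a b : V} (hab : Relation.ReflTransGen G.dir a b)
    (hba : Relation.ReflTransGen G.dir b a) : a = b := by
  rcases Relation.reflTransGen_iff_eq_or_transGen.mp hab with h | h
  · exact h.symm
  · exact absurd (h.trans_left hba) (G.acyclic a)

theorem IsBarren.eq_of_reflTransGen {G : ADMG V} {U : Finset V} (hU : G.IsBarren U)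
    {u x : V} (hu : u ∈ U) (hx : x ∈ U) (hux : Relation.ReflTransGen G.dir u x) : x = u := by
  have hu' : u ∈ G.barren U := hU.symm ▸ hu
  simp only [barren, mem_filter] at hu'
  have hx' : x ∈ G.dec {u} ∩ U :=
    mem_inter.mpr ⟨by simpa [dec] using hux, hx⟩
  rwa [hu'.2, mem_singleton] at hx'

theorem IsBarren.subset_of_subset_anc {G : ADMG V} {A B : Finset V} (hA : G.IsBarren A)
    (hAB : A ⊆ G.anc B) (hBA : B ⊆ G.anc A) : A ⊆ B := by
  intro a ha
  obtain ⟨b, hb, hab⟩ := G.mem_anc.mp (hAB ha)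
  obtain ⟨a', ha', hba'⟩ := G.mem_anc.mp (hBA hb)
  obtain rfl := hA.eq_of_reflTransGen ha ha' (hab.trans hba')
  obtain rfl := G.eq_of_reflTransGen_of_reflTransGen hab hba'
  exact hb

theorem card_anc_lt_of_subset_anc {A B : Finset V} (hA : G.IsBarren A) (hB : G.IsBarren B)
    (hAB : A ⊆ G.anc B) (hne : A ≠ B) : (G.anc A).card < (G.anc B).card := by
  refine card_lt_card ((G.anc_subset_anc_of_subset_anc hAB).ssubset_of_ne fun heq => hne ?_)
  have hBA : B ⊆ G.anc A := heq ▸ G.subset_anc B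
  exact (hA.subset_of_subset_anc hAB hBA).antisymm (hB.subset_of_subset_anc hBA hAB)

theorem hierarchical_of_lt_of_subset_anc {k : ℕ} {e : Fin k → Finset V}
    (hinj : Function.Injective e)
    (hord : ∀ i j : Fin k, e i ⊆ G.anc (e j) → e i ≠ e j → i < j) :
    Hierarchical G e := by
  intro i j hij
  have key : ∀ L : Finset V, e j ⊆ L → ¬ L ⊆ e i ∪ G.tail (e i) := by
    intro L hjL hLi
    have hji : e j ⊆ G.anc (e i) := (hjL.trans hLi).trans (G.margin_subset_anc (e i))
    exact (hord j i hji (hinj.ne hij.ne')).not_gt hij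
  exact ⟨key _ subset_union_left, fun L hL _ => key L hL⟩

end ADMG

/-- there is an enumeration of all heads of `G` whose margin ordering is
hierarchical; in particular, any enumeration extending the strict partial order
`H ≺ H' ⟺ H ⊆ an_G(H') ∧ H ≠ H'` is hierarchical. -/
theorem exists_hierarchical_ordering (G : ADMG V) :
    (∃ (k : ℕ) (e : Fin k → Finset V),
        Function.Injective e ∧ (∀ H : Finset V, G.IsHead H ↔ ∃ i, e i = H) ∧
        Hierarchical G e) ∧
    (∀ (k : ℕ) (e : Fin k → Finset V),
        Function.Injective e → (∀ H : Finset V, G.IsHead H ↔ ∃ i, e i = H) →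
        (∀ i j : Fin k, e i ⊆ G.anc (e j) → e i ≠ e j → i < j) →
        Hierarchical G e) := by
  refine ⟨?_, fun k e hinj _ hord => G.hierarchical_of_lt_of_subset_anc hinj hord⟩
  obtain ⟨k, e, hinj, hmem, hmono⟩ :=
    (univ.filter G.IsHead).exists_fin_enum_monotone fun H => (G.anc H).card
  have hheads : ∀ H : Finset V, G.IsHead H ↔ ∃ i, e i = H := by simpa using hmem
  refine ⟨k, e, hinj, hheads, G.hierarchical_of_lt_of_subset_anc hinj fun i j hij hne => ?_⟩
  have hlt := G.card_anc_lt_of_subset_anc ((hheads _).mpr ⟨i, rfl⟩).2.1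
    ((hheads _).mpr ⟨j, rfl⟩).2.1 hij hne
  by_contra! hji
  exact (hmono hji).not_gt hlt
end

section
/- Let V be a finite index set with finite state spaces X_v of size at least 2, p a strictly positive probability distribution on X_V, L ⊆ M ⊆ V nonempty, N = M ∖ L, and κ_{L|N}(x_L | x_N) = ∑_{A : L ⊆ A ⊆ M} λ_A^M(x_A). Then for every x_L ∈ X̃_L (i.e., with x_v ≤ |X_v| − 2 for all v ∈ L) and every x_N ∈ X_N, ∑_{A ⊆ L} (−1)^{|L∖A|} κ_{L|N}(x_L + 1_A | x_N) = ∑_{D ⊆ L} (−1)^{|D|} log p_{L|N}(x_L + 1_{L∖D} | x_N), where 1_A ∈ X_L has coordinate 1 at v ∈ A and 0 elsewhere, and p_{L|N}(x_L | x_N) = p_M(x_L, x_N)/p_N(x_N); i.e., the alternating sum of the κ's equals the local |L|-way log-linear interaction of the conditional distribution of X_L given X_N = x_N. -/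
open Finset

open scoped Classical

variable {V : Type} [Fintype V] [DecidableEq V]

/-- Joint state space: variable `v` takes values in `{0, …, d v + 1}`,
so each state space has size `d v + 2 ≥ 2`. -/
abbrev Config (V : Type) (d : V → ℕ) : Type := ∀ v : V, Fin (d v + 2)

/-- Marginal `p_M` of `p` on the margin `M`, as a function of a full configuration
(it depends only on the coordinates in `M`). -/
noncomputable def margin (d : V → ℕ) (p : Config V d → ℝ) (M : Finset V)
    (x : Config V d) : ℝ :=
  ∑ y : Config V d, if ∀ v ∈ M, y v = x v then p y else 0

/-- Marginal log-linear parameter `λ_L^M(x_L)`: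
`|X_M|⁻¹ ∑_{y_M ∈ X_M} log p_M(y_M) ∏_{v ∈ L} (|X_v|·1[x_v = y_v] − 1)`.
The sum over `y_M ∈ X_M` is realized by summing over full configurations `y`
that are `0` outside `M` (one representative for each `y_M`). -/
noncomputable def mll (d : V → ℕ) (p : Config V d → ℝ) (L M : Finset V)
    (x : Config V d) : ℝ :=
  (∏ v ∈ M, ((d v + 2 : ℕ) : ℝ))⁻¹ *
    ∑ y : Config V d,
      if ∀ v ∉ M, y v = 0 then
        Real.log (margin d p M y) *
          ∏ v ∈ L, (((d v + 2 : ℕ) : ℝ) * (if x v = y v then 1 else 0) - 1)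
      else 0

/-- Conditional independence `X_A ⊥ X_B | X_C [p]`:
`p_{A∪B∪C}(x) · p_C(x) = p_{A∪C}(x) · p_{B∪C}(x)` for all configurations. -/
def CondIndep (d : V → ℕ) (p : Config V d → ℝ) (A B C : Finset V) : Prop :=
  ∀ x : Config V d,
    margin d p (A ∪ B ∪ C) x * margin d p C x
      = margin d p (A ∪ C) x * margin d p (B ∪ C) x

/-! Summing the MLL parameters `λ_B^M` over `L ⊆ B ⊆ M` factorizes their kernels: each
coordinate of `M \ L` contributes `1 + (|X_v| 1[z_v = y_v] - 1) = |X_v| 1[z_v = y_v]`, so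
`κ_{L|N}(z)` is `|X_M|⁻¹ ∑_y log p_M(y) K_y(z)` with `K_y` a product of one-coordinate factors.
The alternating sum over `A ⊆ L` of a product evaluated at `x + 1_A` is the product of the
one-coordinate differences, in which the constants `-1` on `L` cancel; hence the alternating
sum of `K_y` is `|X_M|` times that of the point mass at `y`, and summing against `log p_M`
recovers the alternating sum of `log p_M`. Finally `log p_N(x_N)` does not depend on `A`, and a
nonempty alternating sum of a constant vanishes. -/

theorem margin_pos (d : V → ℕ) {p : Config V d → ℝ} (hpos : ∀ x, 0 < p x) (M : Finset V)
    (x : Config V d) : 0 < margin d p M x :=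
  sum_pos' (fun y _ => by split_ifs <;> simp [(hpos y).le]) ⟨x, mem_univ x, by simpa using hpos x⟩

theorem margin_congr (d : V → ℕ) (p : Config V d → ℝ) (M : Finset V) {x y : Config V d}
    (h : ∀ v ∈ M, x v = y v) : margin d p M x = margin d p M y := by
  unfold margin
  refine sum_congr rfl fun z _ => if_congr ?_ rfl rfl
  exact forall₂_congr fun v hv => by rw [h v hv]

section Powerset

variable {ι R : Type*} [DecidableEq ι]

theorem sum_powerset_neg_one_pow_mul_prod_ite [CommRing R] (L : Finset ι) (f g : ι → R) :
    ∑ A ∈ L.powerset, (-1) ^ (#L - #A) * ∏ i ∈ L, (if i ∈ A then f i else g i)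
      = ∏ i ∈ L, (f i - g i) := by
  simp_rw [sub_eq_add_neg, prod_add]
  refine sum_congr rfl fun A hA => ?_
  have hAL := mem_powerset.mp hA
  rw [prod_ite, filter_mem_eq_inter, inter_eq_right.mpr hAL, filter_notMem_eq_sdiff,
    prod_neg, card_sdiff_of_subset hAL]
  ring

theorem sum_superset_prod [CommSemiring R] (t : ι → R) {L M : Finset ι} (hLM : L ⊆ M) :
    ∑ B ∈ M.powerset.filter (fun B => L ⊆ B), ∏ i ∈ B, t i
      = (∏ i ∈ L, t i) * ∏ i ∈ M \ L, (1 + t i) := by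
  rw [prod_one_add, mul_sum]
  refine sum_nbij' (fun B => B \ L) (fun C => L ∪ C) ?_ ?_ ?_ ?_ ?_
  · intro B hB
    simp only [mem_filter, mem_powerset] at hB ⊢
    exact sdiff_subset_sdiff hB.1 le_rfl
  · intro C hC
    simp only [mem_filter, mem_powerset] at hC ⊢
    exact ⟨union_subset hLM (hC.trans sdiff_subset), subset_union_left⟩
  · intro B hB
    exact union_sdiff_of_subset (mem_filter.mp hB).2
  · intro C hC
    exact union_sdiff_cancel_left (disjoint_sdiff.mono_right (mem_powerset.mp hC))
  · intro B hB
    rw [← prod_sdiff (mem_filter.mp hB).2, mul_comm]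

end Powerset

section MixedDifference

omit [Fintype V]

variable {d : V → ℕ}

/-- `x + 1_A`, the addition being taken in `Fin (d v + 2)` (it wraps around). -/
def shiftUp (x : Config V d) (A : Finset V) : Config V d :=
  fun v => if v ∈ A then x v + 1 else x v

/-- The local `|L|`-way interaction `∑_{A ⊆ L} (-1)^{|L \ A|} f(x + 1_A)` of `f` at `x`. -/
def mixedDiff (L : Finset V) (x : Config V d) (f : Config V d → ℝ) : ℝ :=
  ∑ A ∈ L.powerset, (-1 : ℝ) ^ (#L - #A) * f (shiftUp x A)

variable {L : Finset V} {x : Config V d}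

theorem mixedDiff_eq_sum_sdiff (f : Config V d → ℝ) :
    mixedDiff L x f = ∑ D ∈ L.powerset, (-1 : ℝ) ^ #D * f (shiftUp x (L \ D)) := by
  refine sum_nbij' (fun A => L \ A) (fun D => L \ D) ?_ ?_ ?_ ?_ ?_
  · intro A _
    simp
  · intro D _
    simp
  · intro A hA
    exact Finset.sdiff_sdiff_eq_self (mem_powerset.mp hA)
  · intro D hD
    exact Finset.sdiff_sdiff_eq_self (mem_powerset.mp hD)
  · intro A hA
    have hAL := mem_powerset.mp hA
    rw [Finset.sdiff_sdiff_eq_self hAL, card_sdiff_of_subset hAL]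

theorem mixedDiff_const (hL : L.Nonempty) (c : ℝ) : mixedDiff L x (fun _ => c) = 0 := by
  have h := sum_pow_mul_eq_add_pow (1 : ℝ) (-1) L
  simp only [one_pow, one_mul, add_neg_cancel, zero_pow hL.card_pos.ne'] at h
  rw [mixedDiff, ← sum_mul, h, zero_mul]

theorem mixedDiff_sub (f g : Config V d → ℝ) :
    mixedDiff L x (fun z => f z - g z) = mixedDiff L x f - mixedDiff L x g := by
  simp only [mixedDiff, mul_sub, sum_sub_distrib]

theorem mixedDiff_sum_mul {β : Type*} (s : Finset β) (c : β → ℝ) (f : β → Config V d → ℝ) :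
    mixedDiff L x (fun z => ∑ y ∈ s, c y * f y z) = ∑ y ∈ s, c y * mixedDiff L x (f y) := by
  simp only [mixedDiff, mul_sum]
  rw [sum_comm]
  exact sum_congr rfl fun _ _ => sum_congr rfl fun _ _ => by ring

theorem mixedDiff_prod_mul_prod {N : Finset V} (hLN : Disjoint L N)
    (F G : ∀ v, Fin (d v + 2) → ℝ) :
    mixedDiff L x (fun z => (∏ v ∈ L, F v (z v)) * ∏ v ∈ N, G v (z v))
      = (∏ v ∈ L, (F v (x v + 1) - F v (x v))) * ∏ v ∈ N, G v (x v) := by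
  rw [← sum_powerset_neg_one_pow_mul_prod_ite, sum_mul]
  refine sum_congr rfl fun A hA => ?_
  have hAN : Disjoint A N := hLN.mono_left (mem_powerset.mp hA)
  have hN : ∏ v ∈ N, G v (shiftUp x A v) = ∏ v ∈ N, G v (x v) :=
    prod_congr rfl fun v hv => by rw [shiftUp, if_neg (disjoint_right.mp hAN hv)]
  dsimp only
  rw [hN]
  simp only [shiftUp, apply_ite (F _)]
  ring

theorem mixedDiff_kappa_kernel {M : Finset V} (hLM : L ⊆ M) (y : Config V d) :
    mixedDiff L x (fun z => (∏ v ∈ L, (((d v + 2 : ℕ) : ℝ) * (if z v = y v then 1 else 0) - 1)) *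
        ∏ v ∈ M \ L, (((d v + 2 : ℕ) : ℝ) * (if z v = y v then 1 else 0)))
      = (∏ v ∈ M, ((d v + 2 : ℕ) : ℝ)) *
        mixedDiff L x (fun z => ∏ v ∈ M, (if z v = y v then (1 : ℝ) else 0)) := by
  have hsplit : ∀ g : V → ℝ, ∏ v ∈ M, g v = (∏ v ∈ L, g v) * ∏ v ∈ M \ L, g v :=
    fun g => (prod_sdiff hLM).symm.trans (mul_comm _ _)
  simp_rw [hsplit (fun v => if _ = y v then (1 : ℝ) else 0)]
  rw [hsplit, mixedDiff_prod_mul_prod disjoint_sdiff (fun v a => if a = y v then 1 else 0)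
      (fun v a => if a = y v then 1 else 0)]
  rw [mixedDiff_prod_mul_prod disjoint_sdiff
    (fun v a => ((d v + 2 : ℕ) : ℝ) * (if a = y v then 1 else 0) - 1)
    (fun v a => ((d v + 2 : ℕ) : ℝ) * (if a = y v then 1 else 0))]
  simp only [sub_sub_sub_cancel_right, ← mul_sub, prod_mul_distrib]
  ring

end MixedDifference

section Kappa

variable (d : V → ℕ) (p : Config V d → ℝ)

/-- `κ_{L|N}(z) = ∑_{L ⊆ B ⊆ M} λ_B^M(z)`. -/
noncomputable def kappa (L M : Finset V) (z : Config V d) : ℝ :=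
  ∑ B ∈ M.powerset.filter (fun B => L ⊆ B), mll d p B M z

/-- Representatives of `X_M`, one configuration per `y_M`, as in the sum defining `mll`. -/
def marginReps (M : Finset V) : Finset (Config V d) :=
  univ.filter fun y => ∀ v ∉ M, y v = 0

theorem sum_marginReps_mul_prod_indicator {R : Type*} [CommSemiring R] {M : Finset V}
    (f : Config V d → R) (hf : ∀ y z : Config V d, (∀ v ∈ M, y v = z v) → f y = f z)
    (z : Config V d) :
    ∑ y ∈ marginReps d M, f y * ∏ v ∈ M, (if z v = y v then 1 else 0) = f z := by
  set w : Config V d := fun v => if v ∈ M then z v else 0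
  have hwz : ∀ v ∈ M, w v = z v := fun v hv => if_pos hv
  have hw : w ∈ marginReps d M := by simp +contextual [marginReps, w]
  rw [sum_eq_single_of_mem w hw, prod_eq_one fun v hv => by simp [hwz v hv], mul_one,
    hf w z hwz]
  intro y hy hyw
  obtain ⟨v, hv⟩ := Function.ne_iff.mp hyw
  have hvM : v ∈ M := by
    by_contra hvM
    exact hv (by simp only [marginReps, mem_filter] at hy; simp [hy.2 v hvM, w, hvM])
  rw [prod_eq_zero hvM (if_neg fun h => hv (h ▸ hwz v hvM).symm), mul_zero]

variable {d}

theorem mll_eq_sum_marginReps (B M : Finset V) (z : Config V d) :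
    mll d p B M z = ∑ y ∈ marginReps d M,
      ((∏ v ∈ M, ((d v + 2 : ℕ) : ℝ))⁻¹ * Real.log (margin d p M y)) *
        ∏ v ∈ B, (((d v + 2 : ℕ) : ℝ) * (if z v = y v then 1 else 0) - 1) := by
  simp only [mll, marginReps, sum_filter, mul_sum, mul_ite, mul_zero, mul_assoc]

theorem kappa_eq_sum_marginReps {L M : Finset V} (hLM : L ⊆ M) (z : Config V d) :
    kappa d p L M z = ∑ y ∈ marginReps d M,
      ((∏ v ∈ M, ((d v + 2 : ℕ) : ℝ))⁻¹ * Real.log (margin d p M y)) *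
        ((∏ v ∈ L, (((d v + 2 : ℕ) : ℝ) * (if z v = y v then 1 else 0) - 1)) *
          ∏ v ∈ M \ L, (((d v + 2 : ℕ) : ℝ) * (if z v = y v then 1 else 0))) := by
  simp only [kappa, mll_eq_sum_marginReps]
  rw [sum_comm]
  simp only [← mul_sum, sum_superset_prod _ hLM, add_sub_cancel]

theorem mixedDiff_kappa {L M : Finset V} (hLM : L ⊆ M) (x : Config V d) :
    mixedDiff L x (kappa d p L M) = mixedDiff L x (fun z => Real.log (margin d p M z)) := by
  have hM : (∏ v ∈ M, ((d v + 2 : ℕ) : ℝ)) ≠ 0 := prod_ne_zero_iff.mpr fun v _ => by positivity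
  calc mixedDiff L x (kappa d p L M)
      = ∑ y ∈ marginReps d M, Real.log (margin d p M y) *
          mixedDiff L x (fun z => ∏ v ∈ M, (if z v = y v then (1 : ℝ) else 0)) := by
        simp only [funext (kappa_eq_sum_marginReps p hLM), mixedDiff_sum_mul,
          mixedDiff_kappa_kernel hLM]
        exact sum_congr rfl fun y _ => by field_simp
    _ = mixedDiff L x (fun z => Real.log (margin d p M z)) := by
        rw [← mixedDiff_sum_mul]
        congr 1
        funext z
        exact sum_marginReps_mul_prod_indicator d _
          (fun y z h => by rw [margin_congr d p M h]) z

end Kappa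

theorem kappa_alternating_sum_general (d : V → ℕ) (p : Config V d → ℝ)
    (hpos : ∀ x, 0 < p x)
    (L M : Finset V) (hL : L.Nonempty) (hLM : L ⊆ M) (x : Config V d) :
    ∑ A ∈ L.powerset, (-1 : ℝ) ^ (L.card - A.card) *
        (∑ B ∈ M.powerset.filter (fun B => L ⊆ B),
          mll d p B M (fun v => if v ∈ A then x v + 1 else x v))
      = ∑ D ∈ L.powerset, (-1 : ℝ) ^ D.card *
          Real.log
            (margin d p M (fun v => if v ∈ L \ D then x v + 1 else x v) /
              margin d p (M \ L) x) := by
  have hlog_div : ∀ z, Real.log (margin d p M z / margin d p (M \ L) x)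
      = Real.log (margin d p M z) - Real.log (margin d p (M \ L) x) := fun z =>
    Real.log_div (margin_pos d hpos M z).ne' (margin_pos d hpos (M \ L) x).ne'
  calc _ = mixedDiff L x (kappa d p L M) := rfl
    _ = mixedDiff L x (fun z => Real.log (margin d p M z)) := mixedDiff_kappa p hLM x
    _ = mixedDiff L x (fun z => Real.log (margin d p M z / margin d p (M \ L) x)) := by
        simp only [hlog_div, mixedDiff_sub, mixedDiff_const hL, sub_zero]
    _ = _ := mixedDiff_eq_sum_sdiff _

/-- with `κ_{L|N}(x_L | x_N) = ∑_{L ⊆ A ⊆ M} λ_A^M(x_A)` and `N = M ∖ L`,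
for `x_L ∈ X̃_L` (no coordinate in `L` takes its top value) the alternating sum
`∑_{A ⊆ L} (−1)^{|L∖A|} κ_{L|N}(x_L + 1_A | x_N)` equals the local `|L|`-way log-linear
interaction `∑_{D ⊆ L} (−1)^{|D|} log p_{L|N}(x_L + 1_{L∖D} | x_N)` of the conditional
distribution of `X_L` given `X_N = x_N`, where `p_{L|N}(x_L | x_N) = p_M(x_L, x_N)/p_N(x_N)`. -/
theorem kappa_alternating_sum (d : V → ℕ) (p : Config V d → ℝ)
    (hpos : ∀ x, 0 < p x) (hsum : ∑ x, p x = 1)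
    (L M : Finset V) (hL : L.Nonempty) (hLM : L ⊆ M) (x : Config V d)
    (hx : ∀ v ∈ L, (x v : ℕ) + 1 < d v + 2) :
    ∑ A ∈ L.powerset, (-1 : ℝ) ^ (L.card - A.card) *
        (∑ B ∈ M.powerset.filter (fun B => L ⊆ B),
          mll d p B M (fun v => if v ∈ A then x v + 1 else x v))
      = ∑ D ∈ L.powerset, (-1 : ℝ) ^ D.card *
          Real.log
            (margin d p M (fun v => if v ∈ L \ D then x v + 1 else x v) /
              margin d p (M \ L) x) :=
  kappa_alternating_sum_general d p hpos L M hL hLM x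
end
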